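/- For all graphs G, adim(G) ≤ (Δ'(G)+1)·bdim(G), where Δ'(G) is the maximum over vertices v and positive integers j of the number of vertices at distance exactly j from v. -/

import Mathlib

open SimpleGraph Finset

variable {V : Type*}

/-- truncated distance `d_k(x,y) = min(d(x,y), k+1)` with `d = ∞` across components. -/
noncomputable def truncDist (G : SimpleGraph V) (k : ℕ) (x y : V) : ℕ∞ :=
  min (G.edist x y) (k + 1)

/-- `f` is a resolving broadcast of `G`. -/
def IsResolvingBroadcast (G : SimpleGraph V) (f : V → ℕ) : Prop :=
  ∀ x y : V, x ≠ y → ∃ z : V, 0 < f z ∧ truncDist G (f z) x z ≠ truncDist G (f z) y z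

/-- broadcast dimension -/
noncomputable def bdim (G : SimpleGraph V) [Fintype V] : ℕ :=
  sInf {c : ℕ | ∃ f : V → ℕ, IsResolvingBroadcast G f ∧ ∑ v, f v = c}

/-- adjacency resolving set -/
def IsAdjResolvingSet (G : SimpleGraph V) (S : Set V) : Prop :=
  ∀ x y : V, x ≠ y → ∃ z ∈ S, truncDist G 1 x z ≠ truncDist G 1 y z

/-- adjacency dimension -/
noncomputable def adim (G : SimpleGraph V) [Fintype V] : ℕ :=
  sInf {n : ℕ | ∃ S : Finset V, IsAdjResolvingSet G ↑S ∧ S.card = n}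

/-- resolving set (metric dimension) -/
def IsResolvingSet (G : SimpleGraph V) (S : Set V) : Prop :=
  ∀ x y : V, x ≠ y → ∃ z ∈ S, G.edist x z ≠ G.edist y z

/-- metric dimension -/
noncomputable def mdim (G : SimpleGraph V) [Fintype V] : ℕ :=
  sInf {n : ℕ | ∃ S : Finset V, IsResolvingSet G ↑S ∧ S.card = n}

/-- `Δ'(G)`: the maximum, over vertices `v` and positive integers `j`, of the
number of vertices at distance exactly `j` from `v`. -/
noncomputable def maxLevelSize {V : Type*} [Fintype V] (G : SimpleGraph V) : ℕ :=
  sSup {t : ℕ | ∃ (v : V) (j : ℕ), 0 < j ∧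
    t = Fintype.card {u : V // G.edist u v = j}}

/-!
Take a resolving broadcast `f` of total weight `bdim G` and let `S` be the union of the balls
`B(z, f z)` over the vertices with `f z > 0`. If `z` separates `x ≠ y` under `d_{f z}`, then one of
`x`, `y` lies in `B(z, f z)` (otherwise both are at truncated distance `f z + 1`), hence in `S`,
and that vertex `v` separates `x` from `y` in the adjacency sense, as `d_1(v, v) = 0`. A ball of radius `k ≥ 1` is its centre plus `k` distance levels, so `|B(z, k)| ≤ 1 + kΔ' ≤
(Δ' + 1)k`, and summing over `z` gives `|S| ≤ (Δ' + 1) · bdim G`.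
-/

namespace SimpleGraph

theorem truncDist_self (G : SimpleGraph V) (k : ℕ) (x : V) : truncDist G k x x = 0 := by
  simp [truncDist]

theorem truncDist_ne_truncDist_self {G : SimpleGraph V} (k : ℕ) {x y : V} (hxy : x ≠ y) :
    truncDist G k y x ≠ truncDist G k x x := by
  rw [truncDist_self]
  refine (lt_min ?_ (by positivity)).ne'
  exact pos_iff_ne_zero.mpr fun h => hxy (edist_eq_zero_iff.mp h).symm

theorem truncDist_eq_of_lt {G : SimpleGraph V} {k : ℕ} {x z : V} (h : (k : ℕ∞) < G.edist x z) :
    truncDist G k x z = k + 1 :=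
  min_eq_right (Order.add_one_le_of_lt h)

theorem isResolvingBroadcast_one (G : SimpleGraph V) : IsResolvingBroadcast G fun _ => 1 :=
  fun x _ hxy => ⟨x, one_pos, (truncDist_ne_truncDist_self 1 hxy).symm⟩

def broadcastReach (G : SimpleGraph V) (f : V → ℕ) : Set V :=
  {u | ∃ z, 0 < f z ∧ G.edist u z ≤ f z}

theorem IsResolvingBroadcast.isAdjResolvingSet_broadcastReach {G : SimpleGraph V} {f : V → ℕ}
    (hf : IsResolvingBroadcast G f) : IsAdjResolvingSet G (broadcastReach G f) := by
  intro x y hxy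
  obtain ⟨z, hz, hsep⟩ := hf x y hxy
  by_cases hx : G.edist x z ≤ f z
  · exact ⟨x, ⟨z, hz, hx⟩, (truncDist_ne_truncDist_self 1 hxy).symm⟩
  by_cases hy : G.edist y z ≤ f z
  · exact ⟨y, ⟨z, hz, hy⟩, truncDist_ne_truncDist_self 1 hxy.symm⟩
  exact absurd ((truncDist_eq_of_lt (not_le.mp hx)).trans
    (truncDist_eq_of_lt (not_le.mp hy)).symm) hsep

section Fintype

variable [Fintype V]

theorem card_level_le_maxLevelSize (G : SimpleGraph V) (v : V) {j : ℕ} (hj : 0 < j) :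
    Fintype.card {u // G.edist u v = j} ≤ maxLevelSize G :=
  le_csSup ⟨Fintype.card V, by rintro t ⟨v, j, -, rfl⟩; exact Fintype.card_subtype_le _⟩
    ⟨v, j, hj, rfl⟩

theorem card_ball_le (G : SimpleGraph V) (z : V) (k : ℕ) :
    Fintype.card {u // G.edist u z ≤ k} ≤ 1 + k * maxLevelSize G := by
  classical
  let level (j : ℕ) : Finset V := univ.filter fun u => G.edist u z = j
  have hcover : univ.filter (fun u => G.edist u z ≤ k) ⊆ {z} ∪ (Icc 1 k).biUnion level := by
    intro u hu
    simp only [mem_filter, mem_univ, true_and] at hu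
    lift G.edist u z to ℕ using ne_top_of_le_ne_top (WithTop.coe_ne_top) hu with m hm
    rcases Nat.eq_zero_or_pos m with rfl | hm0
    · simp [edist_eq_zero_iff.mp hm.symm]
    · simp only [level, mem_union, mem_biUnion, mem_Icc, mem_filter, mem_univ, true_and]
      exact Or.inr ⟨m, ⟨hm0, by exact_mod_cast hu⟩, hm.symm⟩
  rw [Fintype.card_subtype]
  calc #(univ.filter fun u => G.edist u z ≤ k)
      ≤ #({z} ∪ (Icc 1 k).biUnion level) := card_le_card hcover
    _ ≤ 1 + ∑ j ∈ Icc 1 k, #(level j) :=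
        (card_union_le _ _).trans (add_le_add (card_singleton z).le card_biUnion_le)
    _ ≤ 1 + ∑ _j ∈ Icc 1 k, maxLevelSize G := by
        gcongr with j hj
        rw [← Fintype.card_subtype]
        exact card_level_le_maxLevelSize G z (mem_Icc.mp hj).1
    _ = 1 + k * maxLevelSize G := by simp

theorem ncard_broadcastReach_le (G : SimpleGraph V) (f : V → ℕ) :
    (broadcastReach G f).ncard ≤ (maxLevelSize G + 1) * ∑ v, f v := by
  classical
  let ball (z : V) : Finset V := univ.filter fun u => G.edist u z ≤ f z
  have hreach : broadcastReach G f = ↑((univ.filter fun z => 0 < f z).biUnion ball) := by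
    ext u
    simp [broadcastReach, ball]
  rw [hreach, Set.ncard_coe_finset]
  calc #((univ.filter fun z => 0 < f z).biUnion ball)
      ≤ ∑ z ∈ univ.filter (fun z => 0 < f z), #(ball z) := card_biUnion_le
    _ ≤ ∑ z ∈ univ.filter (fun z => 0 < f z), (maxLevelSize G + 1) * f z := by
        refine sum_le_sum fun z hz => ?_
        have hfz : 1 ≤ f z := (mem_filter.mp hz).2
        rw [← Fintype.card_subtype]
        calc _ ≤ 1 + f z * maxLevelSize G := card_ball_le G z (f z)
          _ ≤ (maxLevelSize G + 1) * f z := by nlinarith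
    _ ≤ (maxLevelSize G + 1) * ∑ v, f v := by
        rw [mul_sum]
        exact sum_le_sum_of_subset (filter_subset _ _)

theorem exists_isResolvingBroadcast_sum_eq_bdim (G : SimpleGraph V) :
    ∃ f : V → ℕ, IsResolvingBroadcast G f ∧ ∑ v, f v = bdim G :=
  Nat.sInf_mem (s := {c | ∃ f : V → ℕ, IsResolvingBroadcast G f ∧ ∑ v, f v = c})
    ⟨_, fun _ => 1, isResolvingBroadcast_one G, rfl⟩

theorem adim_le_ncard {G : SimpleGraph V} {S : Set V} (hS : IsAdjResolvingSet G S) :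
    adim G ≤ S.ncard := by
  classical
  rw [adim, Set.ncard_eq_toFinset_card']
  exact Nat.sInf_le ⟨_, by simpa using hS, rfl⟩

end Fintype

end SimpleGraph

theorem stmt_18_general {V : Type*} [Fintype V] (G : SimpleGraph V) :
    adim G ≤ (maxLevelSize G + 1) * bdim G := by
  obtain ⟨f, hf, hsum⟩ := exists_isResolvingBroadcast_sum_eq_bdim G
  calc adim G ≤ (broadcastReach G f).ncard := adim_le_ncard hf.isAdjResolvingSet_broadcastReach
    _ ≤ (maxLevelSize G + 1) * bdim G := hsum ▸ ncard_broadcastReach_le G f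

theorem stmt_18 {V : Type*} [Fintype V] [DecidableEq V] (G : SimpleGraph V) :
    adim G ≤ (maxLevelSize G + 1) * bdim G :=
  stmt_18_general G
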